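/- (One iteration of Oblique Hard Thresholding Pursuit.) Let Ψ, Ψ̃ ∈ K^{m×n}, let x* ∈ K^n be s-sparse, let z ∈ K^m and y = Ψx* + z, let x ∈ K^n be s-sparse, and assume θ := θ_{3s}(Ψ̃*Ψ) < 1. Let v = x + Ψ̃*(y − Ψx), let J₁ ⊆ {1,…,n} with |J₁| = s satisfy min_{j∈J₁}|v_j| ≥ max_{j∉J₁}|v_j|, and let x⁺ be the (unique) vector supported on J₁ with Ψ̃_{J₁}*(y − Ψx⁺) = 0 (well defined since Ψ̃_{J₁}*Ψ_{J₁} is invertible). Then ‖x⁺ − x*‖₂ ≤ √(2θ²/(1−θ²))·‖x − x*‖₂ + ( √(2/(1−θ²)) + 1/(1−θ) )·√(1 + δ_{2s}(Ψ̃))·‖z‖₂. -/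

import Mathlib

open scoped BigOperators
open Matrix MeasureTheory

noncomputable section

namespace ObliquePursuit

variable {𝕜 : Type*} [RCLike 𝕜]

/-- The Euclidean (`ℓ²`) norm of a finitely indexed vector. -/
def l2 {ι : Type*} [Fintype ι] (x : ι → 𝕜) : ℝ :=
  Real.sqrt (∑ i, ‖x i‖ ^ 2)

/-- The spectral (`ℓ² → ℓ²` operator) norm of a matrix. -/
def specNorm {ι κ : Type*} [Fintype ι] [Fintype κ] [DecidableEq κ]
    (M : Matrix ι κ 𝕜) : ℝ :=
  ‖LinearMap.toContinuousLinearMap (Matrix.toEuclideanLin M)‖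

/-- `x` is `s`-sparse: it has at most `s` nonzero entries. -/
def Sparse {ι : Type*} (s : ℕ) (x : ι → 𝕜) : Prop :=
  ∃ J : Finset ι, J.card ≤ s ∧ ∀ i, x i ≠ 0 → i ∈ J

/-- The `s`-restricted biorthogonality constant `θ_s(M)`: the smallest `δ ≥ 0` such that
`|⟨y, Mx⟩ − ⟨y, x⟩| ≤ δ‖x‖₂‖y‖₂` for all `x, y` supported on a common index set of
cardinality at most `s`. -/
def theta {ι : Type*} [Fintype ι] (s : ℕ) (M : Matrix ι ι 𝕜) : ℝ :=
  sInf {δ : ℝ | 0 ≤ δ ∧ ∀ J : Finset ι, J.card ≤ s →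
    ∀ x y : ι → 𝕜, (∀ i, x i ≠ 0 → i ∈ J) → (∀ i, y i ≠ 0 → i ∈ J) →
      ‖star y ⬝ᵥ M.mulVec x - star y ⬝ᵥ x‖ ≤ δ * l2 x * l2 y}

/-- The `s`-restricted isometry constant `δ_s(Ψ)`. -/
def ric {ι κ : Type*} [Fintype ι] [Fintype κ] (s : ℕ) (Ψ : Matrix ι κ 𝕜) : ℝ :=
  sInf {δ : ℝ | 0 ≤ δ ∧ ∀ x : κ → 𝕜, Sparse s x →
    (1 - δ) * l2 x ^ 2 ≤ l2 (Ψ.mulVec x) ^ 2 ∧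
      l2 (Ψ.mulVec x) ^ 2 ≤ (1 + δ) * l2 x ^ 2}

/-- Coordinate projection `Π_J`: keep the entries indexed by `J`, zero out the others. -/
def proj {ι : Type*} [DecidableEq ι] (J : Finset ι) (x : ι → 𝕜) : ι → 𝕜 :=
  fun i => if i ∈ J then x i else 0

/-- The column submatrix `Ψ_J` of `Ψ` formed by the columns indexed by `J`. -/
def cols {ι κ : Type*} (Ψ : Matrix ι κ 𝕜) (J : Finset κ) :
    Matrix ι {j // j ∈ J} 𝕜 :=
  Ψ.submatrix id fun j => (j : κ)

/-- The `j`-th column of `Ψ`. -/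
def col {ι κ : Type*} (Ψ : Matrix ι κ 𝕜) (j : κ) : ι → 𝕜 :=
  fun i => Ψ i j

/-- The complementary oblique projector `E = I − Ψ_J (Ψ̃_J^* Ψ_J)⁻¹ Ψ̃_J^*`
(equal to `I` when `J = ∅`). -/
def obliqueE {ι κ : Type*} [Fintype ι] [DecidableEq ι] [DecidableEq κ]
    (Ψ Ψt : Matrix ι κ 𝕜) (J : Finset κ) : Matrix ι ι 𝕜 :=
  1 - cols Ψ J * ((cols Ψt J)ᴴ * cols Ψ J)⁻¹ * (cols Ψt J)ᴴ

/-- The smallest (real) eigenvalue of a matrix. -/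
def lamMin {ι : Type*} [Fintype ι] (G : Matrix ι ι 𝕜) : ℝ :=
  sInf {r : ℝ | ∃ v : ι → 𝕜, v ≠ 0 ∧ G.mulVec v = (r : 𝕜) • v}

/-- The `j`-th largest singular value (1-indexed) of a matrix, characterized via the
Eckart–Young–Mirsky theorem: `σ_j(A) = min { ‖A − B‖ : rank B < j }` where `‖·‖` is the
spectral norm. -/
def singVal {ι κ : Type*} [Fintype ι] [Fintype κ] [DecidableEq κ]
    (A : Matrix ι κ 𝕜) (j : ℕ) : ℝ :=
  sInf {r : ℝ | ∃ B : Matrix ι κ 𝕜, B.rank < j ∧ r = specNorm (A - B)}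

/-!
Write `u = x⁺ − x*`, `M = Ψ̃*Ψ` and `c = √(1 + δ₂ₛ(Ψ̃))‖z‖`. Every estimate on a restriction `g_T`
comes from duality: `‖g_T‖ ≤ C` as soon as `|⟨w, g⟩| ≤ C‖w‖` for all `w` supported on `T`.

Head: as `x⁺` vanishes off `J₁`, `‖u‖² = ‖u_{J₁}‖² + b²` with `b = ‖x*_{J₁ᶜ}‖`, and testing the
oblique normal equations `Ψ̃_{J₁}*(z − Ψu) = 0` against `w` gives `‖u_{J₁}‖ ≤ θ‖u‖ + c`. The
quadratic inequality `‖u‖² ≤ (θ‖u‖ + c)² + b²` then yields `‖u‖ ≤ b / √(1 − θ²) + c / (1 − θ)`.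

Tail: `v − x* = Ψ̃*z − (M − I)(x − x*)`. Since `J₁` carries the `s` largest entries of `v` and
`|S \ J₁| ≤ |J₁ \ S|` for the support `S` of `x*`, `b ≤ √2 ‖(v − x*)_{S Δ J₁}‖`, and the right
side is at most `√2 (θ‖x − x*‖ + c)` because `S Δ J₁` has at most `2s` elements.
-/

section L2

variable {ι κ : Type*} [Fintype ι] [Fintype κ]

lemma l2_eq_norm_toLp (x : ι → 𝕜) : l2 x = ‖WithLp.toLp 2 x‖ := by
  rw [EuclideanSpace.norm_eq]; rfl

lemma l2_nonneg (x : ι → 𝕜) : 0 ≤ l2 x := Real.sqrt_nonneg _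

lemma l2_sq (x : ι → 𝕜) : l2 x ^ 2 = ∑ i, ‖x i‖ ^ 2 := Real.sq_sqrt (by positivity)

lemma l2_sub_le (x y : ι → 𝕜) : l2 (x - y) ≤ l2 x + l2 y := by
  simpa only [l2_eq_norm_toLp, WithLp.toLp_sub] using
    norm_sub_le (WithLp.toLp 2 x) (WithLp.toLp 2 y)

lemma l2_neg (x : ι → 𝕜) : l2 (-x) = l2 x := by
  simp [l2]

lemma norm_star_dotProduct_le (x y : ι → 𝕜) : ‖star x ⬝ᵥ y‖ ≤ l2 x * l2 y := by
  simpa only [l2_eq_norm_toLp, EuclideanSpace.inner_toLp_toLp, dotProduct_comm]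
    using norm_inner_le_norm (𝕜 := 𝕜) (WithLp.toLp 2 x) (WithLp.toLp 2 y)

lemma l2_mulVec_le_specNorm_mul [DecidableEq κ] (A : Matrix ι κ 𝕜) (x : κ → 𝕜) :
    l2 (A *ᵥ x) ≤ specNorm A * l2 x := by
  rw [l2_eq_norm_toLp, l2_eq_norm_toLp]
  exact (LinearMap.toContinuousLinearMap (Matrix.toEuclideanLin A)).le_opNorm (WithLp.toLp 2 x)

end L2

section Proj

variable {ι : Type*} [DecidableEq ι]

lemma support_proj_subset (J : Finset ι) (x : ι → 𝕜) : Function.support (proj J x) ⊆ J :=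
  fun _ hi => by_contra fun h => hi (if_neg h)

lemma proj_sub (J : Finset ι) (x y : ι → 𝕜) : proj J (x - y) = proj J x - proj J y := by
  ext i; by_cases hi : i ∈ J <;> simp [proj, hi]

lemma norm_proj_sq (J : Finset ι) (x : ι → 𝕜) (i : ι) :
    ‖proj J x i‖ ^ 2 = if i ∈ J then ‖x i‖ ^ 2 else 0 := by
  by_cases hi : i ∈ J <;> simp [proj, hi]

variable [Fintype ι]

lemma proj_compl_eq_zero {J : Finset ι} {x : ι → 𝕜} (hx : Function.support x ⊆ J) :
    proj Jᶜ x = 0 := by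
  ext i
  by_cases hi : i ∈ J
  · simp [proj, hi]
  · simpa [proj, hi] using Function.notMem_support.mp (mt (@hx i) hi)

lemma l2_proj_sq (J : Finset ι) (x : ι → 𝕜) : l2 (proj J x) ^ 2 = ∑ i ∈ J, ‖x i‖ ^ 2 := by
  simp only [l2_sq, norm_proj_sq, Finset.sum_ite_mem, Finset.univ_inter]

lemma l2_sq_eq_proj_add_proj_compl (J : Finset ι) (x : ι → 𝕜) :
    l2 x ^ 2 = l2 (proj J x) ^ 2 + l2 (proj Jᶜ x) ^ 2 := by
  rw [l2_sq, l2_proj_sq, l2_proj_sq, Finset.sum_add_sum_compl]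

lemma star_proj_dotProduct_self (J : Finset ι) (x : ι → 𝕜) :
    star (proj J x) ⬝ᵥ x = ((l2 (proj J x) ^ 2 : ℝ) : 𝕜) := by
  have h (i : ι) : star (proj J x) i * x i = if i ∈ J then ((‖x i‖ ^ 2 : ℝ) : 𝕜) else 0 := by
    by_cases hi : i ∈ J <;> simp [proj, hi, RCLike.conj_mul]
  simp only [dotProduct, h, Finset.sum_ite_mem, Finset.univ_inter, l2_proj_sq, RCLike.ofReal_sum]

lemma l2_proj_le_of_forall_support_subset (J : Finset ι) (g : ι → 𝕜) {C : ℝ} (hC : 0 ≤ C)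
    (h : ∀ w : ι → 𝕜, Function.support w ⊆ J → ‖star w ⬝ᵥ g‖ ≤ C * l2 w) :
    l2 (proj J g) ≤ C := by
  have hw := h (proj J g) (support_proj_subset J g)
  rw [star_proj_dotProduct_self, RCLike.norm_ofReal, abs_of_nonneg (by positivity), sq] at hw
  rcases (l2_nonneg (proj J g)).eq_or_lt with h0 | h0
  · rwa [← h0]
  · exact le_of_mul_le_mul_right hw h0

end Proj

lemma le_sInf_mul_of_forall {S : Set ℝ} (hS : S.Nonempty) {q a : ℝ} (ha : 0 ≤ a)
    (h : ∀ δ ∈ S, q ≤ δ * a) : q ≤ sInf S * a := by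
  rcases ha.eq_or_lt with rfl | ha
  · obtain ⟨δ, hδ⟩ := hS
    simpa using h δ hδ
  · rw [← div_le_iff₀ ha]
    exact le_csInf hS fun δ hδ => (div_le_iff₀ ha).mpr (h δ hδ)

section RestrictedConstants

variable {ι κ : Type*} [Fintype ι] [Fintype κ]

lemma theta_set_nonempty [DecidableEq ι] (s : ℕ) (M : Matrix ι ι 𝕜) :
    {δ : ℝ | 0 ≤ δ ∧ ∀ J : Finset ι, J.card ≤ s →
      ∀ x y : ι → 𝕜, (∀ i, x i ≠ 0 → i ∈ J) → (∀ i, y i ≠ 0 → i ∈ J) →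
        ‖star y ⬝ᵥ M *ᵥ x - star y ⬝ᵥ x‖ ≤ δ * l2 x * l2 y}.Nonempty := by
  refine ⟨specNorm (M - 1), norm_nonneg _, fun J _ x y _ _ => ?_⟩
  rw [← dotProduct_sub, show M *ᵥ x - x = (M - 1) *ᵥ x by rw [sub_mulVec, one_mulVec]]
  calc ‖star y ⬝ᵥ (M - 1) *ᵥ x‖ ≤ l2 y * l2 ((M - 1) *ᵥ x) := norm_star_dotProduct_le _ _
    _ ≤ l2 y * (specNorm (M - 1) * l2 x) :=
        mul_le_mul_of_nonneg_left (l2_mulVec_le_specNorm_mul _ _) (l2_nonneg y)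
    _ = specNorm (M - 1) * l2 x * l2 y := by ring

lemma theta_nonneg [DecidableEq ι] (s : ℕ) (M : Matrix ι ι 𝕜) : 0 ≤ theta s M :=
  le_csInf (theta_set_nonempty s M) fun _ hδ => hδ.1

lemma norm_star_dotProduct_mulVec_sub_le_theta [DecidableEq ι] {s : ℕ} (M : Matrix ι ι 𝕜)
    {J : Finset ι} (hJ : J.card ≤ s) {x y : ι → 𝕜} (hx : Function.support x ⊆ J)
    (hy : Function.support y ⊆ J) :
    ‖star y ⬝ᵥ M *ᵥ x - star y ⬝ᵥ x‖ ≤ theta s M * l2 x * l2 y := by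
  rw [mul_assoc]
  exact le_sInf_mul_of_forall (theta_set_nonempty s M) (mul_nonneg (l2_nonneg x) (l2_nonneg y))
    fun _ hδ => (hδ.2 J hJ x y (@hx) (@hy)).trans_eq (mul_assoc _ _ _)

lemma ric_set_nonempty [DecidableEq κ] (s : ℕ) (Ψ : Matrix ι κ 𝕜) :
    {δ : ℝ | 0 ≤ δ ∧ ∀ x : κ → 𝕜, Sparse s x →
      (1 - δ) * l2 x ^ 2 ≤ l2 (Ψ *ᵥ x) ^ 2 ∧
        l2 (Ψ *ᵥ x) ^ 2 ≤ (1 + δ) * l2 x ^ 2}.Nonempty := by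
  refine ⟨1 + specNorm Ψ ^ 2, by positivity, fun x _ => ⟨?_, ?_⟩⟩
  · nlinarith [sq_nonneg (l2 x), sq_nonneg (l2 (Ψ *ᵥ x)), sq_nonneg (specNorm Ψ)]
  · have h := pow_le_pow_left₀ (l2_nonneg _) (l2_mulVec_le_specNorm_mul Ψ x) 2
    nlinarith [sq_nonneg (l2 x)]

lemma ric_nonneg [DecidableEq κ] (s : ℕ) (Ψ : Matrix ι κ 𝕜) : 0 ≤ ric s Ψ :=
  le_csInf (ric_set_nonempty s Ψ) fun _ hδ => hδ.1

lemma l2_mulVec_le_sqrt_one_add_ric [DecidableEq κ] {s : ℕ} (Ψ : Matrix ι κ 𝕜) {x : κ → 𝕜}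
    (hx : Sparse s x) : l2 (Ψ *ᵥ x) ≤ √(1 + ric s Ψ) * l2 x := by
  have h : l2 (Ψ *ᵥ x) ^ 2 - l2 x ^ 2 ≤ ric s Ψ * l2 x ^ 2 :=
    le_sInf_mul_of_forall (ric_set_nonempty s Ψ) (sq_nonneg _) fun δ hδ => by
      linarith [(hδ.2 x hx).2]
  refine (pow_le_pow_iff_left₀ (l2_nonneg _) (mul_nonneg (Real.sqrt_nonneg _) (l2_nonneg x))
    two_ne_zero).mp ?_
  rw [mul_pow, Real.sq_sqrt (by linarith [ric_nonneg s Ψ])]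
  linarith

end RestrictedConstants

lemma conjTranspose_mulVec_apply {ι κ : Type*} [Fintype ι] (A : Matrix ι κ 𝕜) (r : ι → 𝕜)
    (j : κ) : (Aᴴ *ᵥ r) j = star (col A j) ⬝ᵥ r := by
  simp [mulVec, dotProduct, col, conjTranspose_apply]

section ObliqueProjection

variable {ι κ : Type*} [Fintype ι] [Fintype κ]

lemma star_dotProduct_eq_zero_of_support_subset {J : Finset ι} {w g : ι → 𝕜}
    (hw : Function.support w ⊆ J) (hg : ∀ j ∈ J, g j = 0) : star w ⬝ᵥ g = 0 :=
  Finset.sum_eq_zero fun j _ => by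
    by_cases hj : j ∈ J
    · simp [hg j hj]
    · simp [Function.notMem_support.mp (mt (@hw j) hj)]

variable [DecidableEq κ]

lemma l2_proj_mulVec_sub_le_theta {s : ℕ} (M : Matrix κ κ 𝕜) {J T : Finset κ}
    (hJ : J.card ≤ s) (hT : T ⊆ J) {d : κ → 𝕜} (hd : Function.support d ⊆ J) :
    l2 (proj T (M *ᵥ d - d)) ≤ theta s M * l2 d :=
  l2_proj_le_of_forall_support_subset T _ (mul_nonneg (theta_nonneg s M) (l2_nonneg d))
    fun w hw => by
      rw [dotProduct_sub]
      exact norm_star_dotProduct_mulVec_sub_le_theta M hJ hd (hw.trans (by exact_mod_cast hT))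

lemma norm_star_dotProduct_conjTranspose_mulVec_le {s : ℕ} (Ψ : Matrix ι κ 𝕜) {T : Finset κ}
    (hT : T.card ≤ s) {w : κ → 𝕜} (hw : Function.support w ⊆ T) (z : ι → 𝕜) :
    ‖star w ⬝ᵥ Ψᴴ *ᵥ z‖ ≤ √(1 + ric s Ψ) * l2 z * l2 w := by
  rw [dotProduct_mulVec, ← star_mulVec]
  calc ‖star (Ψ *ᵥ w) ⬝ᵥ z‖ ≤ l2 (Ψ *ᵥ w) * l2 z := norm_star_dotProduct_le _ _
    _ ≤ √(1 + ric s Ψ) * l2 w * l2 z :=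
        mul_le_mul_of_nonneg_right (l2_mulVec_le_sqrt_one_add_ric Ψ ⟨T, hT, @hw⟩) (l2_nonneg z)
    _ = √(1 + ric s Ψ) * l2 z * l2 w := by ring

lemma l2_proj_conjTranspose_mulVec_le {s : ℕ} (Ψ : Matrix ι κ 𝕜) {T : Finset κ}
    (hT : T.card ≤ s) (z : ι → 𝕜) : l2 (proj T (Ψᴴ *ᵥ z)) ≤ √(1 + ric s Ψ) * l2 z :=
  l2_proj_le_of_forall_support_subset T _ (mul_nonneg (Real.sqrt_nonneg _) (l2_nonneg z))
    fun _ hw => norm_star_dotProduct_conjTranspose_mulVec_le Ψ hT hw z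

lemma l2_proj_le_of_orthogonal {s t : ℕ} (Ψ Ψt : Matrix ι κ 𝕜) {J J₁ : Finset κ}
    (hJ : J.card ≤ t) (hJ₁ : J₁.card ≤ s) (hJ₁J : J₁ ⊆ J) {u : κ → 𝕜}
    (hu : Function.support u ⊆ J) (z : ι → 𝕜)
    (horth : ∀ j ∈ J₁, star (col Ψt j) ⬝ᵥ (z - Ψ *ᵥ u) = 0) :
    l2 (proj J₁ u) ≤ theta t (Ψtᴴ * Ψ) * l2 u + √(1 + ric s Ψt) * l2 z := by
  have hC : 0 ≤ theta t (Ψtᴴ * Ψ) * l2 u + √(1 + ric s Ψt) * l2 z :=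
    add_nonneg (mul_nonneg (theta_nonneg _ _) (l2_nonneg u))
      (mul_nonneg (Real.sqrt_nonneg _) (l2_nonneg z))
  refine l2_proj_le_of_forall_support_subset J₁ u hC fun w hw => ?_
  have hperp : star w ⬝ᵥ Ψtᴴ *ᵥ (z - Ψ *ᵥ u) = 0 :=
    star_dotProduct_eq_zero_of_support_subset hw fun j hj =>
      (conjTranspose_mulVec_apply Ψt _ j).trans (horth j hj)
  rw [mulVec_sub, dotProduct_sub, sub_eq_zero] at hperp
  calc ‖star w ⬝ᵥ u‖
      = ‖star w ⬝ᵥ Ψtᴴ *ᵥ z - (star w ⬝ᵥ (Ψtᴴ * Ψ) *ᵥ u - star w ⬝ᵥ u)‖ := by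
        rw [← mulVec_mulVec, ← hperp, sub_sub_cancel]
    _ ≤ √(1 + ric s Ψt) * l2 z * l2 w + theta t (Ψtᴴ * Ψ) * l2 u * l2 w :=
        (norm_sub_le _ _).trans <| add_le_add
          (norm_star_dotProduct_conjTranspose_mulVec_le Ψt hJ₁ hw z)
          (norm_star_dotProduct_mulVec_sub_le_theta _ hJ hu (hw.trans (by exact_mod_cast hJ₁J)))
    _ = (theta t (Ψtᴴ * Ψ) * l2 u + √(1 + ric s Ψt) * l2 z) * l2 w := by ring

end ObliqueProjection

lemma sum_le_sum_of_card_le_of_forall_le {ι : Type*} {P Q : Finset ι} {g : ι → ℝ}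
    (hg : ∀ q ∈ Q, 0 ≤ g q) (hcard : P.card ≤ Q.card) (h : ∀ p ∈ P, ∀ q ∈ Q, g p ≤ g q) :
    ∑ p ∈ P, g p ≤ ∑ q ∈ Q, g q := by
  rcases Q.eq_empty_or_nonempty with rfl | hQ
  · simp_all
  calc ∑ p ∈ P, g p ≤ P.card • Q.inf' hQ g :=
        Finset.sum_le_card_nsmul _ _ _ fun p hp => Finset.le_inf' _ _ fun q hq => h p hp q hq
    _ ≤ Q.card • Q.inf' hQ g := nsmul_le_nsmul_left (Finset.le_inf' _ _ hg) hcard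
    _ ≤ ∑ q ∈ Q, g q := Finset.card_nsmul_le_sum _ _ _ fun q hq => Finset.inf'_le _ hq

lemma l2_proj_compl_le_of_forall_norm_le {ι : Type*} [Fintype ι] [DecidableEq ι]
    {S J : Finset ι} (hcard : S.card ≤ J.card) {x : ι → 𝕜} (hx : Function.support x ⊆ S)
    (v : ι → 𝕜) (hv : ∀ j ∈ J, ∀ l, l ∉ J → ‖v l‖ ≤ ‖v j‖) :
    l2 (proj Jᶜ x) ≤ √2 * l2 (proj (S \ J ∪ J \ S) (v - x)) := by
  have hx0 : ∀ i, i ∉ S → x i = 0 := fun i hi => Function.notMem_support.mp (mt (@hx i) hi)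
  have hmissed : proj Jᶜ x = proj (S \ J) v - proj (S \ J) (v - x) := by
    ext i
    by_cases hiJ : i ∈ J <;> by_cases hiS : i ∈ S <;> simp [proj, hiJ, hiS, hx0]
  have hselected : proj (J \ S) v = proj (J \ S) (v - x) := by
    ext i
    by_cases hiS : i ∈ S <;> simp [proj, hiS, hx0]
  have hcompare : l2 (proj (S \ J) v) ≤ l2 (proj (J \ S) v) := by
    refine (pow_le_pow_iff_left₀ (l2_nonneg _) (l2_nonneg _) two_ne_zero).mp ?_
    rw [l2_proj_sq, l2_proj_sq]
    refine sum_le_sum_of_card_le_of_forall_le (fun _ _ => sq_nonneg _) ?_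
      fun p hp q hq => pow_le_pow_left₀ (norm_nonneg _) (hv q (Finset.mem_sdiff.mp hq).1 p
        (Finset.mem_sdiff.mp hp).2) 2
    have := Finset.card_sdiff_add_card_inter S J
    have := Finset.card_sdiff_add_card_inter J S
    rw [Finset.inter_comm] at this
    omega
  have hsplit : l2 (proj (S \ J ∪ J \ S) (v - x)) ^ 2 =
      l2 (proj (S \ J) (v - x)) ^ 2 + l2 (proj (J \ S) (v - x)) ^ 2 := by
    rw [l2_proj_sq, l2_proj_sq, l2_proj_sq, Finset.sum_union disjoint_sdiff_sdiff]
  calc l2 (proj Jᶜ x) ≤ l2 (proj (S \ J) (v - x)) + l2 (proj (J \ S) (v - x)) := by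
        rw [hmissed, ← hselected]
        linarith [l2_sub_le (proj (S \ J) v) (proj (S \ J) (v - x))]
    _ ≤ √2 * l2 (proj (S \ J ∪ J \ S) (v - x)) := by
        refine (pow_le_pow_iff_left₀ (add_nonneg (l2_nonneg _) (l2_nonneg _))
          (mul_nonneg (Real.sqrt_nonneg 2) (l2_nonneg _)) two_ne_zero).mp ?_
        rw [mul_pow, Real.sq_sqrt zero_le_two, hsplit]
        nlinarith [sq_nonneg (l2 (proj (S \ J) (v - x)) - l2 (proj (J \ S) (v - x)))]

lemma le_div_sqrt_add_div_of_sq_le {θ a b c : ℝ} (hθ0 : 0 ≤ θ) (hθ1 : θ < 1) (hb : 0 ≤ b)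
    (hc : 0 ≤ c) (h : a ^ 2 ≤ (θ * a + c) ^ 2 + b ^ 2) :
    a ≤ b / √(1 - θ ^ 2) + c / (1 - θ) := by
  have h1θ : 0 < 1 - θ := by linarith
  have hθ2 : 0 < 1 - θ ^ 2 := by nlinarith
  obtain ⟨k, rfl⟩ : ∃ k, c = (1 - θ) * k := ⟨c / (1 - θ), by field_simp⟩
  obtain ⟨e, rfl⟩ : ∃ e, a = e + k := ⟨a - k, by ring⟩
  rw [mul_div_cancel_left₀ k h1θ.ne']
  -- in these variables the hypothesis reads `(1 - θ²) e² + 2 (1 - θ) e k ≤ b²`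
  rcases le_or_gt e 0 with he | he
  · have : 0 ≤ b / √(1 - θ ^ 2) := by positivity
    linarith
  have hk : 0 ≤ k := nonneg_of_mul_nonneg_right (by linarith) h1θ
  have hsq : (√(1 - θ ^ 2) * e) ^ 2 ≤ b ^ 2 := by
    rw [mul_pow, Real.sq_sqrt hθ2.le]
    nlinarith [mul_nonneg (mul_nonneg he.le hk) h1θ.le]
  have := (pow_le_pow_iff_left₀ (by positivity) hb two_ne_zero).mp hsq
  rw [← le_div_iff₀' (Real.sqrt_pos.mpr hθ2)] at this
  linarith

section OneIteration

variable {ι κ : Type*} [Fintype ι] [Fintype κ] [DecidableEq κ]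

lemma l2_proj_compl_le_of_threshold {s t : ℕ} (Ψ Ψt : Matrix ι κ 𝕜) {S J J₁ : Finset κ}
    (hS : S.card ≤ s) (hJ₁ : J₁.card = s) (hJ : J.card ≤ t) (hSJ : S ⊆ J) (hJ₁J : J₁ ⊆ J)
    {xstar x v : κ → 𝕜} (hxstar : Function.support xstar ⊆ S) (hx : Function.support x ⊆ J)
    (z : ι → 𝕜) (hv : v = x + Ψtᴴ *ᵥ (Ψ *ᵥ xstar + z - Ψ *ᵥ x))
    (hsel : ∀ j ∈ J₁, ∀ l, l ∉ J₁ → ‖v l‖ ≤ ‖v j‖) :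
    l2 (proj J₁ᶜ xstar) ≤
      √2 * (theta t (Ψtᴴ * Ψ) * l2 (x - xstar) + √(1 + ric (2 * s) Ψt) * l2 z) := by
  have hU : (S \ J₁ ∪ J₁ \ S).card ≤ 2 * s := by
    have := Finset.card_union_le (S \ J₁) (J₁ \ S)
    have := Finset.card_sdiff_add_card_inter S J₁
    have := Finset.card_sdiff_add_card_inter J₁ S
    omega
  have hUJ : S \ J₁ ∪ J₁ \ S ⊆ J :=
    Finset.union_subset ((Finset.sdiff_subset).trans hSJ) ((Finset.sdiff_subset).trans hJ₁J)
  have hd : Function.support (x - xstar) ⊆ J :=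
    (Function.support_sub x xstar).trans
      (Set.union_subset hx (hxstar.trans (by exact_mod_cast hSJ)))
  have hvx : v - xstar = Ψtᴴ *ᵥ z - ((Ψtᴴ * Ψ) *ᵥ (x - xstar) - (x - xstar)) := by
    simp only [hv, ← mulVec_mulVec, mulVec_sub, mulVec_add]
    abel
  refine (l2_proj_compl_le_of_forall_norm_le (hS.trans hJ₁.ge) hxstar v hsel).trans ?_
  gcongr
  rw [hvx, proj_sub, add_comm]
  exact (l2_sub_le _ _).trans (add_le_add (l2_proj_conjTranspose_mulVec_le Ψt hU z)
    (l2_proj_mulVec_sub_le_theta _ hJ hUJ hd))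

lemma l2_sub_le_of_orthogonal {s t : ℕ} (Ψ Ψt : Matrix ι κ 𝕜) {S J J₁ : Finset κ}
    (hJ : J.card ≤ t) (hJ₁ : J₁.card ≤ s) (hSJ : S ⊆ J) (hJ₁J : J₁ ⊆ J) {xstar xplus : κ → 𝕜}
    (hxstar : Function.support xstar ⊆ S) (hxplus : Function.support xplus ⊆ J₁) (z : ι → 𝕜)
    (horth : ∀ j ∈ J₁, star (col Ψt j) ⬝ᵥ (Ψ *ᵥ xstar + z - Ψ *ᵥ xplus) = 0)
    (hθ : theta t (Ψtᴴ * Ψ) < 1) :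
    l2 (xplus - xstar) ≤ l2 (proj J₁ᶜ xstar) / √(1 - theta t (Ψtᴴ * Ψ) ^ 2) +
      √(1 + ric s Ψt) * l2 z / (1 - theta t (Ψtᴴ * Ψ)) := by
  have hu : Function.support (xplus - xstar) ⊆ J :=
    (Function.support_sub xplus xstar).trans
      (Set.union_subset (hxplus.trans (by exact_mod_cast hJ₁J))
        (hxstar.trans (by exact_mod_cast hSJ)))
  have hhead := l2_proj_le_of_orthogonal Ψ Ψt hJ hJ₁ hJ₁J hu z fun j hj => by
    rw [← horth j hj, mulVec_sub]
    congr 1; abel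
  have hsplit : l2 (xplus - xstar) ^ 2 =
      l2 (proj J₁ (xplus - xstar)) ^ 2 + l2 (proj J₁ᶜ xstar) ^ 2 := by
    rw [l2_sq_eq_proj_add_proj_compl J₁, proj_sub J₁ᶜ, proj_compl_eq_zero hxplus, zero_sub,
      l2_neg]
  refine le_div_sqrt_add_div_of_sq_le (theta_nonneg _ _) hθ (l2_nonneg _)
    (mul_nonneg (Real.sqrt_nonneg _) (l2_nonneg z)) ?_
  rw [hsplit]
  gcongr
  exact l2_nonneg _

end OneIteration

/-- one iteration of Oblique Hard Thresholding Pursuit. -/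
theorem statement9 (m n s : ℕ) (Ψ Ψt : Matrix (Fin m) (Fin n) 𝕜)
    (xstar x xplus : Fin n → 𝕜) (hxstar : Sparse s xstar) (hx : Sparse s x)
    (z y : Fin m → 𝕜) (hy : y = Ψ.mulVec xstar + z)
    (θ : ℝ) (hθdef : θ = theta (3 * s) (Ψtᴴ * Ψ)) (hθ : θ < 1)
    (v : Fin n → 𝕜) (hv : v = x + Ψtᴴ.mulVec (y - Ψ.mulVec x))
    (J₁ : Finset (Fin n)) (hJ₁ : J₁.card = s)
    (hsel : ∀ j ∈ J₁, ∀ l, l ∉ J₁ → ‖v l‖ ≤ ‖v j‖)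
    (hxpsupp : ∀ i, xplus i ≠ 0 → i ∈ J₁)
    (hxporth : ∀ j ∈ J₁, star (col Ψt j) ⬝ᵥ (y - Ψ.mulVec xplus) = 0) :
    l2 (xplus - xstar) ≤
      Real.sqrt (2 * θ ^ 2 / (1 - θ ^ 2)) * l2 (x - xstar) +
        (Real.sqrt (2 / (1 - θ ^ 2)) + 1 / (1 - θ)) *
          Real.sqrt (1 + ric (2 * s) Ψt) * l2 z := by
  obtain ⟨S, hS, hSsupp⟩ := hxstar
  obtain ⟨Sx, hSx, hSxsupp⟩ := hx
  have hJ : (S ∪ Sx ∪ J₁).card ≤ 3 * s := by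
    have := Finset.card_union_le (S ∪ Sx) J₁
    have := Finset.card_union_le S Sx
    omega
  have hSJ : S ⊆ S ∪ Sx ∪ J₁ := Finset.subset_union_left.trans Finset.subset_union_left
  have htail := l2_proj_compl_le_of_threshold Ψ Ψt hS hJ₁ hJ hSJ Finset.subset_union_right
    hSsupp (fun i hi => Finset.mem_union_left _ (Finset.mem_union_right _ (hSxsupp i hi))) z
    (hy ▸ hv) hsel
  have hhead := l2_sub_le_of_orthogonal Ψ Ψt hJ (s := 2 * s) (by omega) hSJ
    Finset.subset_union_right hSsupp hxpsupp z (hy ▸ hxporth) (hθdef ▸ hθ)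
  rw [← hθdef] at htail hhead
  have hθ0 : 0 ≤ θ := hθdef ▸ theta_nonneg _ _
  have hp : 0 < √(1 - θ ^ 2) := Real.sqrt_pos.mpr (by nlinarith)
  have h1θ : 0 < 1 - θ := by linarith
  calc l2 (xplus - xstar)
      ≤ √2 * (θ * l2 (x - xstar) + √(1 + ric (2 * s) Ψt) * l2 z) / √(1 - θ ^ 2) +
          √(1 + ric (2 * s) Ψt) * l2 z / (1 - θ) := hhead.trans (by gcongr)
    _ = _ := by
        rw [Real.sqrt_div' _ (by nlinarith), Real.sqrt_div' _ (by nlinarith),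
          Real.sqrt_mul' _ (sq_nonneg θ), Real.sqrt_sq hθ0]
        field_simp
        ring

end ObliquePursuit
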